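/- arXiv:1711.09388 — 5 statements merged into one kernel-verified Lean document; each statement's English description precedes it below -/
import Mathlib

section
/- (Theorem 2: bias of the normalized IPW estimator under a misspecified propensity score.) Under no unmeasured confounding and the stated overlap conditions, E[T/e*(X)] = E[e(X)/e*(X)] and E[(1−T)/(1−e*(X))] = E[(1−e(X))/(1−e*(X))], both strictly positive, and the probability limit of the normalized IPW estimator minus the average causal effect equals E[T·Y/e*(X)]/E[T/e*(X)] − E[(1−T)·Y/(1−e*(X))]/E[(1−T)/(1−e*(X))] − Δ = E[(e(X)/e*(X))·μ1(X)]/E[e(X)/e*(X)] − E[((1−e(X))/(1−e*(X)))·μ0(X)]/E[(1−e(X))/(1−e*(X))] − (μ1 − μ0). -/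
/-!
The weights `1 / e*(X)` and `1 / (1 - e*(X))` are `σ(X)`-measurable and, by overlap for `e*`,
bounded, so they can be pulled out of conditional expectations given `σ(X)`:
`E[T / e*(X)] = E[E[T | X] / e*(X)] = E[e(X) / e*(X)]`. For the outcome term, conditional
independence of `Y(1)` and the indicator `T` given `σ(X)` gives
`E[T Y | X] = E[T Y(1) | X] = e(X) μ₁(X)`, hence `E[T Y / e*(X)] = E[(e(X) / e*(X)) μ₁(X)]`;
the control arm is the same computation for `1 - T`. Overlap for `e` makes the normalizing
denominators positive, and the bias formula is then obtained by substitution.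
-/

open MeasureTheory ProbabilityTheory Filter

namespace MeasureTheory

variable {Ω : Type*} {m mΩ : MeasurableSpace Ω} {μ : Measure Ω}

lemma continuous_setIntegral_mul_of_bound {w : Ω → ℝ} {C : ℝ} {s : Set Ω} (hs : MeasurableSet s)
    (hw : AEStronglyMeasurable w μ) (hwC : ∀ᵐ ω ∂μ, ‖w ω‖ ≤ C) :
    Continuous fun u : Lp ℝ 1 μ => ∫ ω in s, w ω * u ω ∂μ := by
  have hW : MemLp (s.indicator w) ⊤ μ := memLp_top_of_bound (hw.indicator hs) C
    (hwC.mono fun ω h => (norm_indicator_le_norm_self w ω).trans h)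
  convert ((ContinuousLinearMap.mul ℝ ℝ).lpPairing μ ⊤ 1 (hW.toLp _)).continuous using 2 with u
  rw [ContinuousLinearMap.lpPairing_eq_integral, ← integral_indicator hs]
  exact integral_congr_ae (hW.coeFn_toLp.mono fun ω h => by simp [h, Set.indicator_mul_left])

lemma integral_pos_of_ae_pos [NeZero μ] {f : Ω → ℝ} (hfi : Integrable f μ)
    (hf : ∀ᵐ ω ∂μ, 0 < f ω) : 0 < ∫ ω, f ω ∂μ := by
  rw [integral_pos_iff_support_of_nonneg_ae (hf.mono fun _ h => h.le) hfi, pos_iff_ne_zero]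
  intro h0
  obtain ⟨ω, hω, hω0⟩ := (hf.and (measure_eq_zero_iff_ae_notMem.1 h0)).exists
  exact hω0 hω.ne'

lemma integrable_of_ae_pos_condExp [NeZero μ] {f : Ω → ℝ} (h : ∀ᵐ ω ∂μ, 0 < μ[f | m] ω) :
    Integrable f μ := by
  by_contra hf
  rw [condExp_of_not_integrable hf] at h
  obtain ⟨ω, hω⟩ := h.exists
  exact lt_irrefl _ hω

lemma norm_condExp_indicator_le_one (A : Set Ω) : ∀ᵐ ω ∂μ, ‖(μ⟦A | m⟧) ω‖ ≤ 1 :=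
  ae_bdd_abs_condExp_of_ae_bdd_abs <| Eventually.of_forall fun ω => by
    by_cases h : ω ∈ A <;> simp [h]

lemma setIntegral_mul_condExp [IsFiniteMeasure μ] (hm : m ≤ mΩ) {w Z : Ω → ℝ} {C : ℝ}
    (hw : StronglyMeasurable[m] w) (hwC : ∀ᵐ ω ∂μ, ‖w ω‖ ≤ C) (hZ : Integrable Z μ)
    {s : Set Ω} (hs : MeasurableSet[m] s) :
    ∫ ω in s, w ω * μ[Z | m] ω ∂μ = ∫ ω in s, w ω * Z ω ∂μ := by
  have hwZ : Integrable (w * Z) μ := hZ.bdd_mul (hw.mono hm).aestronglyMeasurable hwC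
  refine (setIntegral_congr_ae (hm s hs) ?_).trans (setIntegral_condExp hm hwZ hs)
  exact (condExp_mul_of_stronglyMeasurable_left hw hwZ hZ).mono fun ω h _ => h.symm

lemma integral_mul_condExp [IsFiniteMeasure μ] (hm : m ≤ mΩ) {w Z : Ω → ℝ} {C : ℝ}
    (hw : StronglyMeasurable[m] w) (hwC : ∀ᵐ ω ∂μ, ‖w ω‖ ≤ C) (hZ : Integrable Z μ) :
    ∫ ω, w ω * μ[Z | m] ω ∂μ = ∫ ω, w ω * Z ω ∂μ := by
  simpa using setIntegral_mul_condExp hm hw hwC hZ MeasurableSet.univ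

section InverseWeight

variable {G e : Ω → ℝ} {ν : ℝ}

lemma ae_norm_inv_le_inv (hν : 0 < ν) (hGν : ∀ᵐ ω ∂μ, ν < G ω) :
    ∀ᵐ ω ∂μ, ‖(G ω)⁻¹‖ ≤ ν⁻¹ :=
  hGν.mono fun ω h => by
    rw [norm_inv, Real.norm_of_nonneg (hν.trans h).le]
    exact inv_anti₀ hν h.le

lemma integrable_div_of_lt (hG : AEMeasurable G μ) (hν : 0 < ν) (hGν : ∀ᵐ ω ∂μ, ν < G ω)
    (he : Integrable e μ) : Integrable (fun ω => e ω / G ω) μ := by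
  simp_rw [div_eq_inv_mul]
  exact he.bdd_mul hG.inv.aestronglyMeasurable (ae_norm_inv_le_inv hν hGν)

lemma integral_div_eq_of_ae_eq_condExp [IsFiniteMeasure μ] (hm : m ≤ mΩ) {Z : Ω → ℝ}
    (hG : Measurable[m] G) (hν : 0 < ν) (hGν : ∀ᵐ ω ∂μ, ν < G ω) (hZ : Integrable Z μ)
    (he : e =ᵐ[μ] μ[Z | m]) : ∫ ω, Z ω / G ω ∂μ = ∫ ω, e ω / G ω ∂μ := by
  have hw : StronglyMeasurable[m] fun ω => (G ω)⁻¹ := hG.inv.stronglyMeasurable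
  calc ∫ ω, Z ω / G ω ∂μ = ∫ ω, (G ω)⁻¹ * Z ω ∂μ := by simp_rw [div_eq_inv_mul]
    _ = ∫ ω, (G ω)⁻¹ * μ[Z | m] ω ∂μ :=
      (integral_mul_condExp hm hw (ae_norm_inv_le_inv hν hGν) hZ).symm
    _ = ∫ ω, e ω / G ω ∂μ := integral_congr_ae (he.mono fun ω h => by simp [h, div_eq_inv_mul])

end InverseWeight

end MeasureTheory

namespace ProbabilityTheory

variable {Ω : Type*} {m₁ m₂ m mΩ : MeasurableSpace Ω} [StandardBorelSpace Ω]
  {μ : Measure Ω} [IsFiniteMeasure μ] {hm : m ≤ mΩ}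

lemma ae_ae_condExpKernel_of_ae (hm : m ≤ mΩ) {p : Ω → Prop} (h : ∀ᵐ ω ∂μ, p ω) :
    ∀ᵐ ω ∂μ.trim hm, ∀ᵐ ω' ∂condExpKernel μ m ω, p ω' := by
  rw [← condExpKernel_comp_trim (μ := μ) hm] at h
  exact Measure.ae_ae_of_ae_comp h

lemma CondIndepFun.congr_ae {β γ : Type*} [MeasurableSpace β] [MeasurableSpace γ]
    {f f' : Ω → β} {g g' : Ω → γ} (h : CondIndepFun m hm f g μ) (hf : f =ᵐ[μ] f')
    (hg : g =ᵐ[μ] g') : CondIndepFun m hm f' g' μ :=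
  Kernel.IndepFun.congr' h (ae_ae_condExpKernel_of_ae hm hf) (ae_ae_condExpKernel_of_ae hm hg)

variable {A : Set Ω} {f : Ω → ℝ}

lemma setIntegral_condExp_mul_indicator_const_of_condIndep (hm₁ : m₁ ≤ mΩ) (hm₂ : m₂ ≤ mΩ)
    (hind : CondIndep m m₁ m₂ hm μ) (hA : MeasurableSet[m₂] A) {t : Set Ω}
    (ht : MeasurableSet[m₁] t) (c : ℝ) {s : Set Ω} (hs : MeasurableSet[m] s) :
    ∫ ω in s, (μ⟦A | m⟧) ω * t.indicator (fun _ => c) ω ∂μ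
      = ∫ ω in s, A.indicator (t.indicator fun _ => c) ω ∂μ := by
  have hone : ∫ ω in s, (μ⟦A | m⟧) ω * t.indicator (fun _ => 1) ω ∂μ
      = ∫ ω in s, (t ∩ A).indicator (fun _ => (1 : ℝ)) ω ∂μ := calc
    _ = ∫ ω in s, (μ⟦A | m⟧) ω * (μ⟦t | m⟧) ω ∂μ :=
      (setIntegral_mul_condExp hm stronglyMeasurable_condExp (norm_condExp_indicator_le_one A)
        ((integrable_const 1).indicator (hm₁ t ht)) hs).symm
    _ = ∫ ω in s, (μ⟦t ∩ A | m⟧) ω ∂μ := by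
      refine setIntegral_congr_ae (hm s hs) ?_
      filter_upwards [(condIndep_iff m m₁ m₂ hm hm₁ hm₂ μ).1 hind t A ht hA] with ω h _
      rw [h, Pi.mul_apply, mul_comm]
    _ = _ := setIntegral_condExp hm ((integrable_const 1).indicator
        ((hm₁ t ht).inter (hm₂ A hA))) hs
  have hl : ∀ ω, (μ⟦A | m⟧) ω * t.indicator (fun _ => c) ω
      = c * ((μ⟦A | m⟧) ω * t.indicator (fun _ => 1) ω) := fun ω => by
    by_cases h : ω ∈ t <;> simp [h, mul_comm]
  have hr : ∀ ω, A.indicator (t.indicator fun _ => c) ω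
      = c * (t ∩ A).indicator (fun _ => (1 : ℝ)) ω := fun ω => by
    by_cases h : ω ∈ t <;> by_cases h' : ω ∈ A <;> simp [h, h']
  simp_rw [hl, hr, integral_const_mul, hone]

/-- The indicator case is the definition of conditional independence; both sides are
continuous on `L¹(m₁)`, where such indicators span a dense subspace. -/
lemma setIntegral_condExp_mul_of_condIndep (hm₁ : m₁ ≤ mΩ) (hm₂ : m₂ ≤ mΩ)
    (hind : CondIndep m m₁ m₂ hm μ) (hA : MeasurableSet[m₂] A) (hf : StronglyMeasurable[m₁] f)
    (hfi : Integrable f μ) {s : Set Ω} (hs : MeasurableSet[m] s) :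
    ∫ ω in s, (μ⟦A | m⟧) ω * f ω ∂μ = ∫ ω in s, A.indicator f ω ∂μ := by
  have heA : AEStronglyMeasurable (μ⟦A | m⟧) μ :=
    (stronglyMeasurable_condExp.mono hm).aestronglyMeasurable
  have hbound := norm_condExp_indicator_le_one (μ := μ) (m := m) A
  rw [← memLp_one_iff_integrable] at hfi
  refine MemLp.induction_stronglyMeasurable hm₁ ENNReal.one_ne_top
    (fun u => ∫ ω in s, (μ⟦A | m⟧) ω * u ω ∂μ = ∫ ω in s, A.indicator u ω ∂μ)
    (fun c t ht _ => setIntegral_condExp_mul_indicator_const_of_condIndep hm₁ hm₂ hind hA ht c hs)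
    ?_ ?_ ?_ hfi hf.aestronglyMeasurable
  · intro u v _ hu hv _ _ hPu hPv
    rw [memLp_one_iff_integrable] at hu hv
    simp only [Pi.add_apply, mul_add, Set.indicator_add']
    rw [integral_add (hu.bdd_mul heA hbound).integrableOn (hv.bdd_mul heA hbound).integrableOn,
      integral_add (hu.indicator (hm₂ A hA)).integrableOn (hv.indicator (hm₂ A hA)).integrableOn,
      hPu, hPv]
  · refine isClosed_eq ((continuous_setIntegral_mul_of_bound (hm s hs) heA hbound).comp
      (ContinuousLinearMap.continuous (Submodule.subtypeL _))) ?_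
    simp_rw [setIntegral_indicator (hm₂ A hA)]
    exact (continuous_setIntegral _).comp (ContinuousLinearMap.continuous (Submodule.subtypeL _))
  · intro u v huv _ hPu
    have hl : ∫ ω in s, (μ⟦A | m⟧) ω * v ω ∂μ = ∫ ω in s, (μ⟦A | m⟧) ω * u ω ∂μ :=
      integral_congr_ae <| ae_restrict_of_ae <| huv.mono fun ω h => by simp only [h]
    have hr : ∫ ω in s, A.indicator v ω ∂μ = ∫ ω in s, A.indicator u ω ∂μ :=
      integral_congr_ae <| ae_restrict_of_ae <| huv.mono fun ω h => by
        by_cases hω : ω ∈ A <;> simp [hω, h]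
    rw [hl, hr, hPu]

lemma condExp_indicator_ae_eq_mul_of_condIndep (hm₁ : m₁ ≤ mΩ) (hm₂ : m₂ ≤ mΩ)
    (hind : CondIndep m m₁ m₂ hm μ) (hA : MeasurableSet[m₂] A) (hf : StronglyMeasurable[m₁] f)
    (hfi : Integrable f μ) :
    μ[A.indicator f | m] =ᵐ[μ] μ⟦A | m⟧ * μ[f | m] := by
  have heA : StronglyMeasurable[m] (μ⟦A | m⟧) := stronglyMeasurable_condExp
  have hbound := norm_condExp_indicator_le_one (μ := μ) (m := m) A
  refine (ae_eq_condExp_of_forall_setIntegral_eq hm (hfi.indicator (hm₂ A hA))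
    (fun s _ _ => (integrable_condExp.bdd_mul (heA.mono hm).aestronglyMeasurable
      hbound).integrableOn)
    (fun s hs _ => ?_) (heA.mul stronglyMeasurable_condExp).aestronglyMeasurable).symm
  rw [← setIntegral_condExp_mul_of_condIndep hm₁ hm₂ hind hA hf hfi hs]
  exact setIntegral_mul_condExp hm heA hbound hfi hs

lemma CondIndepFun.condExp_mul_ae_eq_of_zero_or_one {T Y : Ω → ℝ}
    (hind : CondIndepFun m hm Y T μ) (hT01 : ∀ ω, T ω = 0 ∨ T ω = 1)
    (hT : AEStronglyMeasurable T μ) (hY : Integrable Y μ) :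
    μ[fun ω => T ω * Y ω | m] =ᵐ[μ] μ[T | m] * μ[Y | m] := by
  obtain ⟨T', hT', hTT'⟩ : ∃ T', Measurable T' ∧ T =ᵐ[μ] T' :=
    ⟨hT.mk T, hT.stronglyMeasurable_mk.measurable, hT.ae_eq_mk⟩
  obtain ⟨Y', hY', hYY'⟩ : ∃ Y', Measurable Y' ∧ Y =ᵐ[μ] Y' :=
    ⟨hY.1.mk Y, hY.1.stronglyMeasurable_mk.measurable, hY.1.ae_eq_mk⟩
  have hind' : CondIndep m (.comap Y' inferInstance) (.comap T' inferInstance) hm μ :=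
    hind.congr_ae hYY' hTT'
  set A := T' ⁻¹' {1}
  have hA : MeasurableSet[.comap T' inferInstance] A := ⟨{1}, measurableSet_singleton 1, rfl⟩
  have hTA : T =ᵐ[μ] A.indicator 1 := hTT'.mono fun ω h => by
    rcases hT01 ω with h01 | h01 <;> simp [A, ← h, h01]
  have hTY : (fun ω => T ω * Y ω) =ᵐ[μ] A.indicator Y' :=
    (hTA.mul hYY').mono fun ω h => by
      by_cases hω : ω ∈ A <;> simp_all
  calc μ[fun ω => T ω * Y ω | m]
      =ᵐ[μ] μ[A.indicator Y' | m] := condExp_congr_ae hTY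
    _ =ᵐ[μ] μ⟦A | m⟧ * μ[Y' | m] :=
      condExp_indicator_ae_eq_mul_of_condIndep hY'.comap_le hT'.comap_le hind' hA
        (comap_measurable Y').stronglyMeasurable (hY.congr hYY')
    _ =ᵐ[μ] μ[T | m] * μ[Y | m] :=
      (condExp_congr_ae hTA.symm).mul (condExp_congr_ae hYY'.symm)

lemma CondIndepFun.inverse_weighted_integrals [NeZero μ] {T Y G e μY : Ω → ℝ} {ν : ℝ}
    (hind : CondIndepFun m hm Y T μ) (hT01 : ∀ ω, T ω = 0 ∨ T ω = 1) (hT : Integrable T μ)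
    (hY : Integrable Y μ) (hG : Measurable[m] G) (hν : 0 < ν) (hGν : ∀ᵐ ω ∂μ, ν < G ω)
    (he : e =ᵐ[μ] μ[T | m]) (hepos : ∀ᵐ ω ∂μ, 0 < e ω) (hμY : μY =ᵐ[μ] μ[Y | m]) :
    ∫ ω, T ω / G ω ∂μ = ∫ ω, e ω / G ω ∂μ ∧ 0 < ∫ ω, T ω / G ω ∂μ ∧
      ∫ ω, T ω * Y ω / G ω ∂μ = ∫ ω, e ω / G ω * μY ω ∂μ := by
  have hweight := integral_div_eq_of_ae_eq_condExp hm hG hν hGν hT he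
  have hTY : Integrable (fun ω => T ω * Y ω) μ := hY.bdd_mul hT.1 (c := 1) <|
    Eventually.of_forall fun ω => by rcases hT01 ω with h | h <;> simp [h]
  have he_int : Integrable e μ := integrable_condExp.congr he.symm
  refine ⟨hweight, hweight ▸ ?_, ?_⟩
  · exact integral_pos_of_ae_pos
      (integrable_div_of_lt (hG.mono hm le_rfl).aemeasurable hν hGν he_int)
      ((hepos.and hGν).mono fun ω h => div_pos h.1 (hν.trans h.2))
  · calc ∫ ω, T ω * Y ω / G ω ∂μ = ∫ ω, (e * μY) ω / G ω ∂μ :=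
        integral_div_eq_of_ae_eq_condExp hm hG hν hGν hTY
          ((he.mul hμY).trans (hind.condExp_mul_ae_eq_of_zero_or_one hT01 hT.1 hY).symm)
      _ = ∫ ω, e ω / G ω * μY ω ∂μ := by simp_rw [Pi.mul_apply, div_mul_eq_mul_div]

end ProbabilityTheory

theorem bias_ipw2_general
    {Ω : Type*} [MeasurableSpace Ω] [StandardBorelSpace Ω]
    {𝓧 : Type*} [MeasurableSpace 𝓧]
    (μ : Measure Ω) [IsProbabilityMeasure μ]
    (X : Ω → 𝓧) (hX : Measurable X)
    (T Y0 Y1 : Ω → ℝ)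
    (hT01 : ∀ ω, T ω = 0 ∨ T ω = 1)
    (hY0int : Integrable Y0 μ) (hY1int : Integrable Y1 μ)
    (Y : Ω → ℝ) (hY : Y = fun ω => T ω * Y1 ω + (1 - T ω) * Y0 ω)
    -- no unmeasured confounding: Y(t) ⟂ T | σ(X), t = 0, 1
    (hNUC0 : CondIndepFun (MeasurableSpace.comap X inferInstance) hX.comap_le Y0 T μ)
    (hNUC1 : CondIndepFun (MeasurableSpace.comap X inferInstance) hX.comap_le Y1 T μ)
    -- e(X): a version of P(T = 1 | σ(X)) = E[T | σ(X)]
    (eX : Ω → ℝ) (heX : eX =ᵐ[μ] μ[T | MeasurableSpace.comap X inferInstance])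
    -- μt(X): versions of E[Y(t) | σ(X)], t = 0, 1
    (μ0X : Ω → ℝ) (hμ0X : μ0X =ᵐ[μ] μ[Y0 | MeasurableSpace.comap X inferInstance])
    (μ1X : Ω → ℝ) (hμ1X : μ1X =ᵐ[μ] μ[Y1 | MeasurableSpace.comap X inferInstance])
    -- overlap for the true propensity score
    (η : ℝ) (hη : 0 < η)
    (hover : ∀ᵐ ω ∂μ, η < eX ω ∧ eX ω < 1 - η)
    -- misspecified propensity score e*(X) = g(X) and overlap under misspecification
    (g : 𝓧 → ℝ) (hg : Measurable g)
    (ν : ℝ) (hν : 0 < ν)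
    (hover' : ∀ᵐ ω ∂μ, ν < g (X ω) ∧ g (X ω) < 1 - ν) :
    (∫ ω, T ω / g (X ω) ∂μ) = (∫ ω, eX ω / g (X ω) ∂μ) ∧
    0 < (∫ ω, T ω / g (X ω) ∂μ) ∧
    (∫ ω, (1 - T ω) / (1 - g (X ω)) ∂μ) = (∫ ω, (1 - eX ω) / (1 - g (X ω)) ∂μ) ∧
    0 < (∫ ω, (1 - T ω) / (1 - g (X ω)) ∂μ) ∧
    (∫ ω, T ω * Y ω / g (X ω) ∂μ) / (∫ ω, T ω / g (X ω) ∂μ)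
        - (∫ ω, (1 - T ω) * Y ω / (1 - g (X ω)) ∂μ)
            / (∫ ω, (1 - T ω) / (1 - g (X ω)) ∂μ)
        - ((∫ ω, Y1 ω ∂μ) - ∫ ω, Y0 ω ∂μ)
      = (∫ ω, (eX ω / g (X ω)) * μ1X ω ∂μ) / (∫ ω, eX ω / g (X ω) ∂μ)
        - (∫ ω, ((1 - eX ω) / (1 - g (X ω))) * μ0X ω ∂μ)
            / (∫ ω, (1 - eX ω) / (1 - g (X ω)) ∂μ)
        - ((∫ ω, Y1 ω ∂μ) - ∫ ω, Y0 ω ∂μ) := by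
  have hG : Measurable[.comap X inferInstance] fun ω => g (X ω) := hg.comp (comap_measurable X)
  have hT : Integrable T μ := integrable_of_ae_pos_condExp <|
    (hover.and heX).mono fun ω h => h.2 ▸ hη.trans h.1.1
  have h1mT : (fun ω => 1 - eX ω) =ᵐ[μ] μ[fun ω => 1 - T ω | .comap X inferInstance] := by
    have hsub := condExp_sub (integrable_const (1 : ℝ)) hT (.comap X inferInstance)
    rw [condExp_const hX.comap_le] at hsub
    filter_upwards [heX, hsub] with ω h h'
    exact (congrArg (1 - ·) h).trans h'.symm
  have hTY : ∀ ω, T ω * Y ω = T ω * Y1 ω := fun ω => by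
    rcases hT01 ω with h | h <;> simp [hY, h]
  have h1mTY : ∀ ω, (1 - T ω) * Y ω = (1 - T ω) * Y0 ω := fun ω => by
    rcases hT01 ω with h | h <;> simp [hY, h]
  have h1mT01 : ∀ ω, 1 - T ω = 0 ∨ 1 - T ω = 1 := fun ω => by
    rcases hT01 ω with h | h <;> simp [h]
  have hNUC0' : CondIndepFun _ hX.comap_le Y0 (fun ω => 1 - T ω) μ :=
    hNUC0.comp measurable_id (measurable_const.sub measurable_id)
  obtain ⟨hden1, hden1_pos, hnum1⟩ := hNUC1.inverse_weighted_integrals hT01 hT hY1int hG hν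
    (hover'.mono fun _ h => h.1) heX (hover.mono fun _ h => hη.trans h.1) hμ1X
  obtain ⟨hden0, hden0_pos, hnum0⟩ :=
    hNUC0'.inverse_weighted_integrals (G := fun ω => 1 - g (X ω)) h1mT01
      ((integrable_const 1).sub hT) hY0int (hG.const_sub 1) hν
      (hover'.mono fun _ h => by linarith [h.2]) h1mT (hover.mono fun _ h => by linarith [h.2])
      hμ0X
  simp_rw [hTY, h1mTY]
  exact ⟨hden1, hden1_pos, hden0, hden0_pos, by rw [hden1, hden0, hnum1, hnum0]⟩

/-- Theorem 2: bias of the normalized IPW estimator under a misspecified propensity score.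
The normalizing denominators satisfy `E[T/e*(X)] = E[e(X)/e*(X)] > 0` and
`E[(1−T)/(1−e*(X))] = E[(1−e(X))/(1−e*(X))] > 0`, and
`E[T·Y/e*(X)]/E[T/e*(X)] − E[(1−T)·Y/(1−e*(X))]/E[(1−T)/(1−e*(X))] − Δ
  = E[(e(X)/e*(X))·μ1(X)]/E[e(X)/e*(X)]
    − E[((1−e(X))/(1−e*(X)))·μ0(X)]/E[(1−e(X))/(1−e*(X))] − (μ1 − μ0)`. -/
theorem bias_ipw2
    {Ω : Type*} [MeasurableSpace Ω] [StandardBorelSpace Ω]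
    {𝓧 : Type*} [MeasurableSpace 𝓧]
    (μ : Measure Ω) [IsProbabilityMeasure μ]
    (X : Ω → 𝓧) (hX : Measurable X)
    (T Y0 Y1 : Ω → ℝ)
    (hT01 : ∀ ω, T ω = 0 ∨ T ω = 1)
    (hY0int : Integrable Y0 μ) (hY1int : Integrable Y1 μ)
    (Y : Ω → ℝ) (hY : Y = fun ω => T ω * Y1 ω + (1 - T ω) * Y0 ω)
    -- no unmeasured confounding: Y(t) ⟂ T | σ(X), t = 0, 1
    (hNUC0 : CondIndepFun (MeasurableSpace.comap X inferInstance) hX.comap_le Y0 T μ)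
    (hNUC1 : CondIndepFun (MeasurableSpace.comap X inferInstance) hX.comap_le Y1 T μ)
    -- e(X): a version of P(T = 1 | σ(X)) = E[T | σ(X)]
    (eX : Ω → ℝ) (heX : eX =ᵐ[μ] μ[T | MeasurableSpace.comap X inferInstance])
    -- μt(X): versions of E[Y(t) | σ(X)], t = 0, 1
    (μ0X : Ω → ℝ) (hμ0X : μ0X =ᵐ[μ] μ[Y0 | MeasurableSpace.comap X inferInstance])
    (μ1X : Ω → ℝ) (hμ1X : μ1X =ᵐ[μ] μ[Y1 | MeasurableSpace.comap X inferInstance])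
    -- overlap for the true propensity score
    (η : ℝ) (hη : 0 < η)
    (hover : ∀ᵐ ω ∂μ, η < eX ω ∧ eX ω < 1 - η)
    -- misspecified propensity score e*(X) = g(X) and overlap under misspecification
    (g : 𝓧 → ℝ) (hg : Measurable g)
    (ν : ℝ) (hν : 0 < ν)
    (hover' : ∀ᵐ ω ∂μ, ν < g (X ω) ∧ g (X ω) < 1 - ν)
    -- integrability of the displayed functionals
    (hint1 : Integrable (fun ω => T ω * Y ω / g (X ω)) μ)
    (hint2 : Integrable (fun ω => (1 - T ω) * Y ω / (1 - g (X ω))) μ)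
    (hint3 : Integrable (fun ω => (eX ω / g (X ω)) * μ1X ω) μ)
    (hint4 : Integrable (fun ω => ((1 - eX ω) / (1 - g (X ω))) * μ0X ω) μ)
    (hint5 : Integrable (fun ω => T ω / g (X ω)) μ)
    (hint6 : Integrable (fun ω => (1 - T ω) / (1 - g (X ω))) μ)
    (hint7 : Integrable (fun ω => eX ω / g (X ω)) μ)
    (hint8 : Integrable (fun ω => (1 - eX ω) / (1 - g (X ω))) μ) :
    (∫ ω, T ω / g (X ω) ∂μ) = (∫ ω, eX ω / g (X ω) ∂μ) ∧
    0 < (∫ ω, T ω / g (X ω) ∂μ) ∧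
    (∫ ω, (1 - T ω) / (1 - g (X ω)) ∂μ) = (∫ ω, (1 - eX ω) / (1 - g (X ω)) ∂μ) ∧
    0 < (∫ ω, (1 - T ω) / (1 - g (X ω)) ∂μ) ∧
    (∫ ω, T ω * Y ω / g (X ω) ∂μ) / (∫ ω, T ω / g (X ω) ∂μ)
        - (∫ ω, (1 - T ω) * Y ω / (1 - g (X ω)) ∂μ)
            / (∫ ω, (1 - T ω) / (1 - g (X ω)) ∂μ)
        - ((∫ ω, Y1 ω ∂μ) - ∫ ω, Y0 ω ∂μ)
      = (∫ ω, (eX ω / g (X ω)) * μ1X ω ∂μ) / (∫ ω, eX ω / g (X ω) ∂μ)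
        - (∫ ω, ((1 - eX ω) / (1 - g (X ω))) * μ0X ω ∂μ)
            / (∫ ω, (1 - eX ω) / (1 - g (X ω)) ∂μ)
        - ((∫ ω, Y1 ω ∂μ) - ∫ ω, Y0 ω ∂μ) :=
  bias_ipw2_general μ X hX T Y0 Y1 hT01 hY0int hY1int Y hY hNUC0 hNUC1 eX heX μ0X hμ0X μ1X hμ1X η hη
    hover g hg ν hν hover'
end

section
/- (Theorem 3: bias of the doubly robust estimator when both models are misspecified.) Under no unmeasured confounding and the stated overlap conditions, the probability limit of the DR estimator minus the average causal effect equals E[(T·Y − (T − e*(X))·μ1*(X))/e*(X)] − E[((1−T)·Y + (T − e*(X))·μ0*(X))/(1−e*(X))] − Δ = E[((e(X) − e*(X))·(μ1(X) − μ1*(X)))/e*(X)] + E[((e(X) − e*(X))·(μ0(X) − μ0*(X)))/(1 − e*(X))]. -/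
/-!
Conditionally on `σ(X)`, each arm of the doubly robust estimator is an augmented IPW term
`(A·Y − (A − π)·h)/π` in which `π` and `h` are functions of `X`, so they factor out of
`E[· | X]`. No unmeasured confounding makes `A` and `Y` conditionally independent, whence
`E[A·Y | X] = e·μ` and `E[(A·Y − (A − π)·h)/π | X] = μ + (e − π)(μ − h)/π`. Integrating gives the
arm's mean plus its bias term; the control arm is the same computation with `1 − T` and `1 − e*`.
-/

open MeasureTheory ProbabilityTheory

theorem MeasureTheory.integrable_of_ae_condExp_ne_zero {α E : Type*} [NormedAddCommGroup E]
    [NormedSpace ℝ E] [CompleteSpace E] {m m₀ : MeasurableSpace α} {μ : Measure α} [NeZero μ]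
    {f : α → E} (h : ∀ᵐ x ∂μ, μ[f | m] x ≠ 0) : Integrable f μ := by
  by_contra hf
  rw [condExp_of_not_integrable hf] at h
  simpa using h.exists

namespace ProbabilityTheory

variable {Ω : Type*} {m mΩ : MeasurableSpace Ω} [StandardBorelSpace Ω] {hm : m ≤ mΩ}
  {μ : Measure Ω} [IsFiniteMeasure μ]

theorem CondIndepFun.congr {β β' : Type*} [MeasurableSpace β] [MeasurableSpace β']
    {f f' : Ω → β} {g g' : Ω → β'} (h : CondIndepFun m hm f g μ)
    (hf : f =ᵐ[μ] f') (hg : g =ᵐ[μ] g') : CondIndepFun m hm f' g' μ := by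
  rw [← condExpKernel_comp_trim (μ := μ) hm] at hf hg
  exact Kernel.IndepFun.congr' h (Measure.ae_ae_of_ae_comp hf) (Measure.ae_ae_of_ae_comp hg)

theorem CondIndepFun.condExp_mul_of_measurable {f g : Ω → ℝ} (h : CondIndepFun m hm f g μ)
    (hf : Measurable f) (hg : Measurable g) (hfi : Integrable f μ) (hgi : Integrable g μ)
    (hfgi : Integrable (f * g) μ) : μ[f * g | m] =ᵐ[μ] μ[f | m] * μ[g | m] := by
  -- `ℝ × ℝ` is countably generated, so `f` and `g` are independent under the conditional
  -- distribution `condExpKernel μ m ω` for a.e. `ω`, not merely set by set.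
  have hker := (condIndepFun_iff_map_prod_eq_prod_map_map hf hg).1 h
  filter_upwards [ae_of_ae_trim hm hker, condExp_ae_eq_integral_condExpKernel hm hfgi,
    condExp_ae_eq_integral_condExpKernel hm hfi, condExp_ae_eq_integral_condExpKernel hm hgi]
    with ω hω hfg hf' hg'
  have hind : IndepFun f g (condExpKernel μ m ω) :=
    (indepFun_iff_map_prod_eq_prod_map_map hf.aemeasurable hg.aemeasurable).2 <| by
      rwa [Kernel.prod_apply, Kernel.map_apply _ hf, Kernel.map_apply _ hg,
        Kernel.map_apply _ (hf.prodMk hg)] at hω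
  rw [hfg, Pi.mul_apply, hf', hg']
  exact hind.integral_fun_mul_eq_mul_integral hf.aestronglyMeasurable hg.aestronglyMeasurable

theorem CondIndepFun.condExp_mul {f g : Ω → ℝ} (h : CondIndepFun m hm f g μ)
    (hfi : Integrable f μ) (hgi : Integrable g μ) (hfgi : Integrable (f * g) μ) :
    μ[f * g | m] =ᵐ[μ] μ[f | m] * μ[g | m] := by
  have hf := hfi.aestronglyMeasurable
  have hg := hgi.aestronglyMeasurable
  have hfg : f * g =ᵐ[μ] hf.mk f * hg.mk g := hf.ae_eq_mk.mul hg.ae_eq_mk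
  calc μ[f * g | m] =ᵐ[μ] μ[hf.mk f * hg.mk g | m] := condExp_congr_ae hfg
    _ =ᵐ[μ] μ[hf.mk f | m] * μ[hg.mk g | m] :=
      (h.congr hf.ae_eq_mk hg.ae_eq_mk).condExp_mul_of_measurable
        hf.stronglyMeasurable_mk.measurable hg.stronglyMeasurable_mk.measurable
        (hfi.congr hf.ae_eq_mk) (hgi.congr hg.ae_eq_mk) (hfgi.congr hfg)
    _ =ᵐ[μ] μ[f | m] * μ[g | m] :=
      (condExp_congr_ae hf.ae_eq_mk.symm).mul (condExp_congr_ae hg.ae_eq_mk.symm)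


/-- The augmented IPW outcome of one treatment arm: `A` is its indicator, `π` a working propensity
of it and `h` a working outcome regression. -/
noncomputable def augmentedIPW (A Y π h : Ω → ℝ) (ω : Ω) : ℝ :=
  (A ω * Y ω - (A ω - π ω) * h ω) / π ω

theorem condExp_augmentedIPW {A Y π h : Ω → ℝ} {C ν : ℝ}
    (hAY : CondIndepFun m hm A Y μ) (hA : ∀ᵐ ω ∂μ, ‖A ω‖ ≤ C)
    (hAi : Integrable A μ) (hYi : Integrable Y μ)
    (hπm : StronglyMeasurable[m] π) (hπi : Integrable π μ) (hν : 0 < ν)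
    (hπ : ∀ᵐ ω ∂μ, ν ≤ π ω) (hhm : StronglyMeasurable[m] h)
    (hF : Integrable (augmentedIPW A Y π h) μ) {p μY : Ω → ℝ} (hp : p =ᵐ[μ] μ[A | m])
    (hμY : μY =ᵐ[μ] μ[Y | m]) :
    μ[augmentedIPW A Y π h | m] =ᵐ[μ] fun ω ↦ μY ω + (p ω - π ω) * (μY ω - h ω) / π ω := by
  have hπinv : StronglyMeasurable[m] π⁻¹ := hπm.measurable.inv.stronglyMeasurable
  have hπinv_le : ∀ᵐ ω ∂μ, ‖π⁻¹ ω‖ ≤ ν⁻¹ := by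
    filter_upwards [hπ] with ω hω
    rw [Pi.inv_apply, norm_inv, Real.norm_of_nonneg (hν.le.trans hω)]
    exact inv_anti₀ hν hω
  have hAYi : Integrable (A * Y) μ := hYi.bdd_mul hAi.aestronglyMeasurable hA
  have hwAYi : Integrable (π⁻¹ * (A * Y)) μ :=
    hAYi.bdd_mul (hπinv.mono hm).aestronglyMeasurable hπinv_le
  have hsplit : augmentedIPW A Y π h = π⁻¹ * (A * Y) - (h * π⁻¹) * (A - π) := by
    funext ω
    simp only [augmentedIPW, Pi.mul_apply, Pi.sub_apply, Pi.inv_apply]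
    ring
  have hrest : Integrable ((h * π⁻¹) * (A - π)) μ :=
    (hwAYi.sub hF).congr (.of_forall fun ω ↦ by simp [hsplit])
  calc μ[augmentedIPW A Y π h | m]
      = μ[π⁻¹ * (A * Y) - (h * π⁻¹) * (A - π) | m] := by rw [hsplit]
    _ =ᵐ[μ] μ[π⁻¹ * (A * Y) | m] - μ[(h * π⁻¹) * (A - π) | m] := condExp_sub hwAYi hrest m
    _ =ᵐ[μ] π⁻¹ * μ[A * Y | m] - (h * π⁻¹) * μ[A - π | m] :=
      (condExp_mul_of_stronglyMeasurable_left hπinv hwAYi hAYi).sub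
        (condExp_mul_of_stronglyMeasurable_left (hhm.mul hπinv) hrest (hAi.sub hπi))
    _ =ᵐ[μ] π⁻¹ * (μ[A | m] * μ[Y | m]) - (h * π⁻¹) * (μ[A | m] - π) := by
      refine (Filter.EventuallyEq.rfl.mul (hAY.condExp_mul hAi hYi hAYi)).sub
        (Filter.EventuallyEq.rfl.mul ?_)
      simpa only [condExp_of_stronglyMeasurable hm hπm hπi] using condExp_sub hAi hπi m
    _ =ᵐ[μ] fun ω ↦ μY ω + (p ω - π ω) * (μY ω - h ω) / π ω := by
      filter_upwards [hπ, hp, hμY] with ω hω hpω hμYω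
      have : π ω ≠ 0 := (hν.trans_le hω).ne'
      simp only [Pi.mul_apply, Pi.sub_apply, Pi.inv_apply, ← hpω, ← hμYω]
      field_simp
      ring

theorem integral_augmentedIPW {A Y π h : Ω → ℝ} {C ν : ℝ}
    (hAY : CondIndepFun m hm A Y μ) (hA : ∀ᵐ ω ∂μ, ‖A ω‖ ≤ C)
    (hAi : Integrable A μ) (hYi : Integrable Y μ)
    (hπm : StronglyMeasurable[m] π) (hπi : Integrable π μ) (hν : 0 < ν)
    (hπ : ∀ᵐ ω ∂μ, ν ≤ π ω) (hhm : StronglyMeasurable[m] h)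
    (hF : Integrable (augmentedIPW A Y π h) μ) {p μY : Ω → ℝ} (hp : p =ᵐ[μ] μ[A | m])
    (hμY : μY =ᵐ[μ] μ[Y | m]) :
    ∫ ω, augmentedIPW A Y π h ω ∂μ
      = ∫ ω, Y ω ∂μ + ∫ ω, (p ω - π ω) * (μY ω - h ω) / π ω ∂μ := by
  have hcond := condExp_augmentedIPW hAY hA hAi hYi hπm hπi hν hπ hhm hF hp hμY
  have hμYi : Integrable μY μ := integrable_condExp.congr hμY.symm
  have hbias : Integrable (fun ω ↦ (p ω - π ω) * (μY ω - h ω) / π ω) μ :=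
    ((integrable_condExp.congr hcond).sub hμYi).congr (.of_forall fun ω ↦ by simp)
  calc ∫ ω, augmentedIPW A Y π h ω ∂μ
      = ∫ ω, μ[augmentedIPW A Y π h | m] ω ∂μ := (integral_condExp hm).symm
    _ = ∫ ω, μY ω + (p ω - π ω) * (μY ω - h ω) / π ω ∂μ := integral_congr_ae hcond
    _ = ∫ ω, Y ω ∂μ + ∫ ω, (p ω - π ω) * (μY ω - h ω) / π ω ∂μ := by
      rw [integral_add hμYi hbias, integral_congr_ae hμY, integral_condExp hm]

theorem integral_augmentedIPW_one_sub {A Y π h : Ω → ℝ} {C ν : ℝ}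
    (hAY : CondIndepFun m hm A Y μ) (hA : ∀ᵐ ω ∂μ, ‖A ω‖ ≤ C)
    (hAi : Integrable A μ) (hYi : Integrable Y μ)
    (hπm : StronglyMeasurable[m] π) (hπi : Integrable π μ) (hν : 0 < ν)
    (hπ : ∀ᵐ ω ∂μ, ν ≤ 1 - π ω) (hhm : StronglyMeasurable[m] h)
    (hF : Integrable (augmentedIPW (fun ω ↦ 1 - A ω) Y (fun ω ↦ 1 - π ω) h) μ) {p μY : Ω → ℝ}
    (hp : p =ᵐ[μ] μ[A | m]) (hμY : μY =ᵐ[μ] μ[Y | m]) :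
    ∫ ω, augmentedIPW (fun ω ↦ 1 - A ω) Y (fun ω ↦ 1 - π ω) h ω ∂μ
      = ∫ ω, Y ω ∂μ - ∫ ω, (p ω - π ω) * (μY ω - h ω) / (1 - π ω) ∂μ := by
  have hAY' : CondIndepFun m hm (fun ω ↦ 1 - A ω) Y μ :=
    hAY.comp (measurable_const.sub measurable_id) measurable_id
  have hA' : ∀ᵐ ω ∂μ, ‖1 - A ω‖ ≤ 1 + C := hA.mono fun ω hω ↦
    (norm_sub_le _ _).trans (by rw [norm_one]; linarith)
  have hp' : (fun ω ↦ 1 - p ω) =ᵐ[μ] μ[fun ω ↦ 1 - A ω | m] := by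
    filter_upwards [condExp_sub (integrable_const 1) hAi m, hp] with ω hω hpω
    change _ = μ[(fun _ ↦ (1 : ℝ)) - A | m] ω
    rw [hω, Pi.sub_apply, condExp_const hm, hpω]
  have hneg : (fun ω ↦ (1 - p ω - (1 - π ω)) * (μY ω - h ω) / (1 - π ω))
      = fun ω ↦ -((p ω - π ω) * (μY ω - h ω) / (1 - π ω)) := by
    funext ω
    ring
  rw [integral_augmentedIPW (π := fun ω ↦ 1 - π ω) hAY' hA' ((integrable_const 1).sub hAi) hYi
    (stronglyMeasurable_const.sub hπm) ((integrable_const 1).sub hπi) hν hπ hhm hF hp' hμY,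
    hneg, integral_neg, sub_eq_add_neg]

end ProbabilityTheory

theorem bias_dr_general
    {Ω : Type*} [MeasurableSpace Ω] [StandardBorelSpace Ω]
    {𝓧 : Type*} [MeasurableSpace 𝓧]
    (μ : Measure Ω) [IsProbabilityMeasure μ]
    (X : Ω → 𝓧) (hX : Measurable X)
    (T Y0 Y1 : Ω → ℝ)
    (hT01 : ∀ ω, T ω = 0 ∨ T ω = 1)
    (hY0int : Integrable Y0 μ) (hY1int : Integrable Y1 μ)
    (Y : Ω → ℝ) (hY : Y = fun ω => T ω * Y1 ω + (1 - T ω) * Y0 ω)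
    -- no unmeasured confounding: Y(t) ⟂ T | σ(X), t = 0, 1
    (hNUC0 : CondIndepFun (MeasurableSpace.comap X inferInstance) hX.comap_le Y0 T μ)
    (hNUC1 : CondIndepFun (MeasurableSpace.comap X inferInstance) hX.comap_le Y1 T μ)
    -- e(X): a version of P(T = 1 | σ(X)) = E[T | σ(X)]
    (eX : Ω → ℝ) (heX : eX =ᵐ[μ] μ[T | MeasurableSpace.comap X inferInstance])
    -- μt(X): versions of E[Y(t) | σ(X)], t = 0, 1
    (μ0X : Ω → ℝ) (hμ0X : μ0X =ᵐ[μ] μ[Y0 | MeasurableSpace.comap X inferInstance])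
    (μ1X : Ω → ℝ) (hμ1X : μ1X =ᵐ[μ] μ[Y1 | MeasurableSpace.comap X inferInstance])
    -- overlap for the true propensity score
    (η : ℝ) (hη : 0 < η)
    (hover : ∀ᵐ ω ∂μ, η < eX ω ∧ eX ω < 1 - η)
    -- misspecified propensity score e*(X) = g(X) and overlap under misspecification
    (g : 𝓧 → ℝ) (hg : Measurable g)
    (ν : ℝ) (hν : 0 < ν)
    (hover' : ∀ᵐ ω ∂μ, ν < g (X ω) ∧ g (X ω) < 1 - ν)
    -- misspecified outcome regression limits μt*(X) = ht(X), t = 0, 1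
    (h0 h1 : 𝓧 → ℝ) (hh0 : Measurable h0) (hh1 : Measurable h1)
    -- integrability of the displayed functionals
    (hint1 : Integrable
      (fun ω => (T ω * Y ω - (T ω - g (X ω)) * h1 (X ω)) / g (X ω)) μ)
    (hint2 : Integrable
      (fun ω => ((1 - T ω) * Y ω + (T ω - g (X ω)) * h0 (X ω)) / (1 - g (X ω))) μ) :
    (∫ ω, (T ω * Y ω - (T ω - g (X ω)) * h1 (X ω)) / g (X ω) ∂μ)
        - (∫ ω, ((1 - T ω) * Y ω + (T ω - g (X ω)) * h0 (X ω)) / (1 - g (X ω)) ∂μ)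
        - ((∫ ω, Y1 ω ∂μ) - ∫ ω, Y0 ω ∂μ)
      = (∫ ω, ((eX ω - g (X ω)) * (μ1X ω - h1 (X ω))) / g (X ω) ∂μ)
        + ∫ ω, ((eX ω - g (X ω)) * (μ0X ω - h0 (X ω))) / (1 - g (X ω)) ∂μ := by
  have hσX (φ : 𝓧 → ℝ) (hφ : Measurable φ) :
      StronglyMeasurable[MeasurableSpace.comap X inferInstance] fun ω ↦ φ (X ω) :=
    (hφ.comp (comap_measurable X)).stronglyMeasurable
  -- `T` is not assumed measurable; overlap rules out the junk value `μ[T | _] = 0`.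
  have hTi : Integrable T μ := integrable_of_ae_condExp_ne_zero <| by
    filter_upwards [heX, hover] with ω he ho
    exact he ▸ (hη.trans ho.1).ne'
  have hT : ∀ ω, ‖T ω‖ ≤ 1 := fun ω ↦ by rcases hT01 ω with h | h <;> simp [h]
  have hgi : Integrable (fun ω ↦ g (X ω)) μ := by
    refine .of_bound (hg.comp hX).aestronglyMeasurable 1 ?_
    filter_upwards [hover'] with ω hω
    rw [Real.norm_eq_abs, abs_le]
    constructor <;> linarith [hω.1, hω.2]
  have hF1 : (fun ω ↦ (T ω * Y ω - (T ω - g (X ω)) * h1 (X ω)) / g (X ω))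
      = augmentedIPW T Y1 (fun ω ↦ g (X ω)) (fun ω ↦ h1 (X ω)) := by
    funext ω
    rcases hT01 ω with h | h <;> simp only [augmentedIPW, hY, h] <;> ring
  have hF0 : (fun ω ↦ ((1 - T ω) * Y ω + (T ω - g (X ω)) * h0 (X ω)) / (1 - g (X ω)))
      = augmentedIPW (fun ω ↦ 1 - T ω) Y0 (fun ω ↦ 1 - g (X ω)) (fun ω ↦ h0 (X ω)) := by
    funext ω
    rcases hT01 ω with h | h <;> simp only [augmentedIPW, hY, h] <;> ring
  rw [hF1] at hint1 ⊢
  rw [hF0] at hint2 ⊢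
  rw [integral_augmentedIPW hNUC1.symm (.of_forall hT) hTi hY1int (hσX g hg) hgi
      hν (hover'.mono fun _ h ↦ h.1.le) (hσX h1 hh1) hint1 heX hμ1X,
    integral_augmentedIPW_one_sub hNUC0.symm (.of_forall hT) hTi hY0int (hσX g hg)
      hgi hν (hover'.mono fun _ h ↦ by linarith [h.2]) (hσX h0 hh0) hint2 heX hμ0X]
  ring

/-- Theorem 3: bias of the doubly robust estimator when both models are misspecified:
`E[(T·Y − (T − e*(X))·μ1*(X))/e*(X)] − E[((1−T)·Y + (T − e*(X))·μ0*(X))/(1−e*(X))] − Δ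
  = E[((e(X) − e*(X))·(μ1(X) − μ1*(X)))/e*(X)]
    + E[((e(X) − e*(X))·(μ0(X) − μ0*(X)))/(1 − e*(X))]`. -/
theorem bias_dr
    {Ω : Type*} [MeasurableSpace Ω] [StandardBorelSpace Ω]
    {𝓧 : Type*} [MeasurableSpace 𝓧]
    (μ : Measure Ω) [IsProbabilityMeasure μ]
    (X : Ω → 𝓧) (hX : Measurable X)
    (T Y0 Y1 : Ω → ℝ)
    (hT01 : ∀ ω, T ω = 0 ∨ T ω = 1)
    (hY0int : Integrable Y0 μ) (hY1int : Integrable Y1 μ)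
    (Y : Ω → ℝ) (hY : Y = fun ω => T ω * Y1 ω + (1 - T ω) * Y0 ω)
    -- no unmeasured confounding: Y(t) ⟂ T | σ(X), t = 0, 1
    (hNUC0 : CondIndepFun (MeasurableSpace.comap X inferInstance) hX.comap_le Y0 T μ)
    (hNUC1 : CondIndepFun (MeasurableSpace.comap X inferInstance) hX.comap_le Y1 T μ)
    -- e(X): a version of P(T = 1 | σ(X)) = E[T | σ(X)]
    (eX : Ω → ℝ) (heX : eX =ᵐ[μ] μ[T | MeasurableSpace.comap X inferInstance])
    -- μt(X): versions of E[Y(t) | σ(X)], t = 0, 1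
    (μ0X : Ω → ℝ) (hμ0X : μ0X =ᵐ[μ] μ[Y0 | MeasurableSpace.comap X inferInstance])
    (μ1X : Ω → ℝ) (hμ1X : μ1X =ᵐ[μ] μ[Y1 | MeasurableSpace.comap X inferInstance])
    -- overlap for the true propensity score
    (η : ℝ) (hη : 0 < η)
    (hover : ∀ᵐ ω ∂μ, η < eX ω ∧ eX ω < 1 - η)
    -- misspecified propensity score e*(X) = g(X) and overlap under misspecification
    (g : 𝓧 → ℝ) (hg : Measurable g)
    (ν : ℝ) (hν : 0 < ν)
    (hover' : ∀ᵐ ω ∂μ, ν < g (X ω) ∧ g (X ω) < 1 - ν)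
    -- misspecified outcome regression limits μt*(X) = ht(X), t = 0, 1
    (h0 h1 : 𝓧 → ℝ) (hh0 : Measurable h0) (hh1 : Measurable h1)
    -- integrability of the displayed functionals
    (hint1 : Integrable
      (fun ω => (T ω * Y ω - (T ω - g (X ω)) * h1 (X ω)) / g (X ω)) μ)
    (hint2 : Integrable
      (fun ω => ((1 - T ω) * Y ω + (T ω - g (X ω)) * h0 (X ω)) / (1 - g (X ω))) μ)
    (hint3 : Integrable
      (fun ω => ((eX ω - g (X ω)) * (μ1X ω - h1 (X ω))) / g (X ω)) μ)
    (hint4 : Integrable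
      (fun ω => ((eX ω - g (X ω)) * (μ0X ω - h0 (X ω))) / (1 - g (X ω))) μ) :
    (∫ ω, (T ω * Y ω - (T ω - g (X ω)) * h1 (X ω)) / g (X ω) ∂μ)
        - (∫ ω, ((1 - T ω) * Y ω + (T ω - g (X ω)) * h0 (X ω)) / (1 - g (X ω)) ∂μ)
        - ((∫ ω, Y1 ω ∂μ) - ∫ ω, Y0 ω ∂μ)
      = (∫ ω, ((eX ω - g (X ω)) * (μ1X ω - h1 (X ω))) / g (X ω) ∂μ)
        + ∫ ω, ((eX ω - g (X ω)) * (μ0X ω - h0 (X ω))) / (1 - g (X ω)) ∂μ :=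
  bias_dr_general μ X hX T Y0 Y1 hT01 hY0int hY1int Y hY hNUC0 hNUC1 eX heX μ0X hμ0X μ1X hμ1X η hη
    hover g hg ν hν hover' h0 h1 hh0 hh1 hint1 hint2
end

section
/- (Theorem 5(a): sufficient condition for the DR bias component to be smaller than that of the simple IPW estimator.) Let W, M, M* be integrable real random variables with W·M and W·M* integrable, and write cov[W,M] = E[W·M] − E[W]·E[M] and cov[W,M*] = E[W·M*] − E[W]·E[M*]. If E[M*] = E[M] and 0 < (E[W] − 1)·E[M] < cov[W, M*] < cov[W, M], then |E[(W − 1)·(M − M*)]| < |E[(W − 1)·M]|. -/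
open MeasureTheory

/-- Theorem 5(a): sufficient condition for the first bias component of the DR estimator to
be smaller than that of the simple IPW estimator: if `E[M*] = E[M]` and
`0 < (E[W] − 1)·E[M] < cov[W, M*] < cov[W, M]`,
then `|E[(W − 1)·(M − M*)]| < |E[(W − 1)·M]|`. -/
theorem dr_vs_ipw1_sufficient_a
    {Ω : Type*} [MeasurableSpace Ω] (μ : Measure Ω) [IsProbabilityMeasure μ]
    (W M Mstar : Ω → ℝ) (hW : Integrable W μ) (hM : Integrable M μ)
    (hMstar : Integrable Mstar μ)
    (hWM : Integrable (fun ω => W ω * M ω) μ)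
    (hWMstar : Integrable (fun ω => W ω * Mstar ω) μ)
    (hmeans : (∫ ω, Mstar ω ∂μ) = ∫ ω, M ω ∂μ)
    (h0 : 0 < ((∫ ω, W ω ∂μ) - 1) * ∫ ω, M ω ∂μ)
    (h1 : ((∫ ω, W ω ∂μ) - 1) * (∫ ω, M ω ∂μ)
      < (∫ ω, W ω * Mstar ω ∂μ) - (∫ ω, W ω ∂μ) * ∫ ω, Mstar ω ∂μ)
    (h2 : (∫ ω, W ω * Mstar ω ∂μ) - (∫ ω, W ω ∂μ) * (∫ ω, Mstar ω ∂μ)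
      < (∫ ω, W ω * M ω ∂μ) - (∫ ω, W ω ∂μ) * ∫ ω, M ω ∂μ) :
    |∫ ω, (W ω - 1) * (M ω - Mstar ω) ∂μ| < |∫ ω, (W ω - 1) * M ω ∂μ| := by
  have e1 : ∫ ω, (W ω - 1) * (M ω - Mstar ω) ∂μ
      = (∫ ω, W ω * M ω ∂μ) - (∫ ω, W ω * Mstar ω ∂μ)
        - (∫ ω, M ω ∂μ) + (∫ ω, Mstar ω ∂μ) := by
    have : (fun ω => (W ω - 1) * (M ω - Mstar ω))
        = fun ω => W ω * M ω - W ω * Mstar ω - M ω + Mstar ω := by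
      funext ω; ring
    have i1 : Integrable (fun ω => W ω * M ω - W ω * Mstar ω) μ := hWM.sub hWMstar
    have i2 : Integrable (fun ω => W ω * M ω - W ω * Mstar ω - M ω) μ := i1.sub hM
    rw [this, integral_add i2 hMstar, integral_sub i1 hM, integral_sub hWM hWMstar]
  have e2 : ∫ ω, (W ω - 1) * M ω ∂μ
      = (∫ ω, W ω * M ω ∂μ) - (∫ ω, M ω ∂μ) := by
    have : (fun ω => (W ω - 1) * M ω) = fun ω => W ω * M ω - M ω := by
      funext ω; ring
    rw [this, integral_sub hWM hM]
  have hμ1 : (∫ ω, (1 : ℝ) ∂μ) = 1 := by simp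
  rw [e1, e2, hmeans] at *
  set a := ((∫ ω, W ω ∂μ) - 1) * ∫ ω, M ω ∂μ with ha
  set cs := (∫ ω, W ω * Mstar ω ∂μ) - (∫ ω, W ω ∂μ) * ∫ ω, M ω ∂μ with hcs
  set c := (∫ ω, W ω * M ω ∂μ) - (∫ ω, W ω ∂μ) * ∫ ω, M ω ∂μ with hc
  have k1 : (∫ ω, W ω * M ω ∂μ) - (∫ ω, W ω * Mstar ω ∂μ)
      - (∫ ω, M ω ∂μ) + (∫ ω, M ω ∂μ) = c - cs := by ring
  have k2 : (∫ ω, W ω * M ω ∂μ) - (∫ ω, M ω ∂μ) = c + a := by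
    rw [hc, ha]; ring
  rw [k1, k2]
  rw [abs_of_pos (by linarith), abs_of_pos (by linarith)]
  linarith
end

section
/- (Theorem 6: necessary condition for the DR bias component to be smaller than that of the normalized IPW estimator.) Let W, M, M* be integrable real random variables with W·M and W·M* integrable and E[W] > 0, and write cov[W,M] = E[W·M] − E[W]·E[M]. If |E[(W − 1)·(M − M*)]| < |E[W·M]/E[W] − E[M]|, then E[(W − 1)·M] − |cov[W, M]|/E[W] < E[(W − 1)·M*] < E[(W − 1)·M] + |cov[W, M]|/E[W]. -/
open MeasureTheory

theorem abs_div_sub_eq_abs_sub_mul_div {a b c : ℝ} (hb : 0 < b) :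
    |a / b - c| = |a - b * c| / b := by
  rw [div_sub' hb.ne', abs_div, abs_of_pos hb]

theorem MeasureTheory.Integrable.sub_one_mul {Ω : Type*} [MeasurableSpace Ω] {μ : Measure Ω}
    {W f : Ω → ℝ} (hf : Integrable f μ) (hWf : Integrable (fun ω => W ω * f ω) μ) :
    Integrable (fun ω => (W ω - 1) * f ω) μ := by
  simpa only [sub_mul, one_mul, Pi.sub_def] using hWf.sub hf

theorem dr_vs_ipw2_necessary_general
    {Ω : Type*} [MeasurableSpace Ω] (μ : Measure Ω)
    (W M Mstar : Ω → ℝ) (hM : Integrable M μ)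
    (hMstar : Integrable Mstar μ)
    (hWM : Integrable (fun ω => W ω * M ω) μ)
    (hWMstar : Integrable (fun ω => W ω * Mstar ω) μ)
    (hEW : 0 < ∫ ω, W ω ∂μ)
    (hlt : |∫ ω, (W ω - 1) * (M ω - Mstar ω) ∂μ|
      < |(∫ ω, W ω * M ω ∂μ) / (∫ ω, W ω ∂μ) - ∫ ω, M ω ∂μ|) :
    (∫ ω, (W ω - 1) * M ω ∂μ)
        - |(∫ ω, W ω * M ω ∂μ) - (∫ ω, W ω ∂μ) * ∫ ω, M ω ∂μ| / (∫ ω, W ω ∂μ)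
      < (∫ ω, (W ω - 1) * Mstar ω ∂μ) ∧
    (∫ ω, (W ω - 1) * Mstar ω ∂μ)
      < (∫ ω, (W ω - 1) * M ω ∂μ)
        + |(∫ ω, W ω * M ω ∂μ) - (∫ ω, W ω ∂μ) * ∫ ω, M ω ∂μ| / (∫ ω, W ω ∂μ) := by
  have hsplit : ∫ ω, (W ω - 1) * (M ω - Mstar ω) ∂μ
      = (∫ ω, (W ω - 1) * M ω ∂μ) - ∫ ω, (W ω - 1) * Mstar ω ∂μ := by
    simp_rw [mul_sub]
    exact integral_sub (hM.sub_one_mul hWM) (hMstar.sub_one_mul hWMstar)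
  rw [hsplit, abs_div_sub_eq_abs_sub_mul_div hEW] at hlt
  obtain ⟨hlower, hupper⟩ := abs_sub_lt_iff.mp hlt
  constructor <;> linarith

/-- Theorem 6: necessary condition for the first bias component of the DR estimator to be
smaller than that of the normalized IPW estimator: if `E[W] > 0` and
`|E[(W − 1)·(M − M*)]| < |E[W·M]/E[W] − E[M]|`, then
`E[(W − 1)·M] − |cov[W, M]|/E[W] < E[(W − 1)·M*] < E[(W − 1)·M] + |cov[W, M]|/E[W]`. -/
theorem dr_vs_ipw2_necessary
    {Ω : Type*} [MeasurableSpace Ω] (μ : Measure Ω) [IsProbabilityMeasure μ]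
    (W M Mstar : Ω → ℝ) (hW : Integrable W μ) (hM : Integrable M μ)
    (hMstar : Integrable Mstar μ)
    (hWM : Integrable (fun ω => W ω * M ω) μ)
    (hWMstar : Integrable (fun ω => W ω * Mstar ω) μ)
    (hEW : 0 < ∫ ω, W ω ∂μ)
    (hlt : |∫ ω, (W ω - 1) * (M ω - Mstar ω) ∂μ|
      < |(∫ ω, W ω * M ω ∂μ) / (∫ ω, W ω ∂μ) - ∫ ω, M ω ∂μ|) :
    (∫ ω, (W ω - 1) * M ω ∂μ)
        - |(∫ ω, W ω * M ω ∂μ) - (∫ ω, W ω ∂μ) * ∫ ω, M ω ∂μ| / (∫ ω, W ω ∂μ)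
      < (∫ ω, (W ω - 1) * Mstar ω ∂μ) ∧
    (∫ ω, (W ω - 1) * Mstar ω ∂μ)
      < (∫ ω, (W ω - 1) * M ω ∂μ)
        + |(∫ ω, W ω * M ω ∂μ) - (∫ ω, W ω ∂μ) * ∫ ω, M ω ∂μ| / (∫ ω, W ω ∂μ) :=
  dr_vs_ipw2_necessary_general μ W M Mstar hM hMstar hWM hWMstar hEW hlt
end

section
/- (Theorem 7(a): sufficient condition for the DR bias component to be smaller than that of the normalized IPW estimator.) Let W, M, M* be integrable real random variables with W·M and W·M* integrable and E[W] > 0, and write cov[W,M] = E[W·M] − E[W]·E[M] and cov[W,M*] = E[W·M*] − E[W]·E[M*]. If E[M] = E[M*] and cov[W, M] − |cov[W, M]/E[W]| < cov[W, M*] < cov[W, M] + |cov[W, M]/E[W]|, then |E[(W − 1)·(M − M*)]| < |E[W·M]/E[W] − E[M]|. -/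
open MeasureTheory

/-- Theorem 7(a): sufficient condition for the first bias component of the DR estimator to
be smaller than that of the normalized IPW estimator: if `E[W] > 0`, `E[M] = E[M*]` and
`cov[W, M] − |cov[W, M]/E[W]| < cov[W, M*] < cov[W, M] + |cov[W, M]/E[W]|`, then
`|E[(W − 1)·(M − M*)]| < |E[W·M]/E[W] − E[M]|`. -/
theorem dr_vs_ipw2_sufficient_a
    {Ω : Type*} [MeasurableSpace Ω] (μ : Measure Ω) [IsProbabilityMeasure μ]
    (W M Mstar : Ω → ℝ) (hW : Integrable W μ) (hM : Integrable M μ)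
    (hMstar : Integrable Mstar μ)
    (hWM : Integrable (fun ω => W ω * M ω) μ)
    (hWMstar : Integrable (fun ω => W ω * Mstar ω) μ)
    (hEW : 0 < ∫ ω, W ω ∂μ)
    (hmeans : (∫ ω, M ω ∂μ) = ∫ ω, Mstar ω ∂μ)
    (h1 : ((∫ ω, W ω * M ω ∂μ) - (∫ ω, W ω ∂μ) * ∫ ω, M ω ∂μ)
        - |((∫ ω, W ω * M ω ∂μ) - (∫ ω, W ω ∂μ) * ∫ ω, M ω ∂μ) / (∫ ω, W ω ∂μ)|
      < (∫ ω, W ω * Mstar ω ∂μ) - (∫ ω, W ω ∂μ) * ∫ ω, Mstar ω ∂μ)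
    (h2 : (∫ ω, W ω * Mstar ω ∂μ) - (∫ ω, W ω ∂μ) * (∫ ω, Mstar ω ∂μ)
      < ((∫ ω, W ω * M ω ∂μ) - (∫ ω, W ω ∂μ) * ∫ ω, M ω ∂μ)
        + |((∫ ω, W ω * M ω ∂μ) - (∫ ω, W ω ∂μ) * ∫ ω, M ω ∂μ) / (∫ ω, W ω ∂μ)|) :
    |∫ ω, (W ω - 1) * (M ω - Mstar ω) ∂μ|
      < |(∫ ω, W ω * M ω ∂μ) / (∫ ω, W ω ∂μ) - ∫ ω, M ω ∂μ| := by
  have hint : (∫ ω, (W ω - 1) * (M ω - Mstar ω) ∂μ)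
      = (∫ ω, W ω * M ω ∂μ) - (∫ ω, W ω * Mstar ω ∂μ)
        - (∫ ω, M ω ∂μ) + (∫ ω, Mstar ω ∂μ) := by
    calc ∫ ω, (W ω - 1) * (M ω - Mstar ω) ∂μ
        = ∫ ω, (W ω * M ω - W ω * Mstar ω) - (M ω - Mstar ω) ∂μ := by
          congr 1; funext ω; ring
      _ = (∫ ω, W ω * M ω - W ω * Mstar ω ∂μ) - ∫ ω, M ω - Mstar ω ∂μ :=
          integral_sub (hWM.sub hWMstar) (hM.sub hMstar)
      _ = _ := by rw [integral_sub hWM hWMstar, integral_sub hM hMstar]; ring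
  set a := ∫ ω, W ω * M ω ∂μ
  set b := ∫ ω, W ω ∂μ
  set m := ∫ ω, M ω ∂μ
  set c := ∫ ω, W ω * Mstar ω ∂μ
  rw [hint, ← hmeans]
  have hb : b ≠ 0 := ne_of_gt hEW
  have habs : |a / b - m| = |(a - b * m) / b| := by
    congr 1
    field_simp
  rw [habs]
  rw [abs_lt]
  rw [← hmeans] at h1 h2
  constructor
  · nlinarith [abs_nonneg ((a - b * m) / b), abs_div (a - b*m) b, abs_of_pos hEW]
  · nlinarith [abs_nonneg ((a - b * m) / b), abs_div (a - b*m) b, abs_of_pos hEW]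
end
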